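/- Let T₄ be the lattice ℤ⁴ with Gram matrix [[2,1,1,1],[1,2,0,1],[1,0,4,2],[1,1,2,4]]. Then T₄ is a positive definite even lattice with determinant 25 and level 5, and the subgroup of T₄ generated by the set {v ∈ T₄ : (v,v) = 2} is a sublattice of rank 2 isometric to the root lattice A₂; in particular, the vectors of norm 2 in T₄ do not span T₄⊗ℚ. -/

import Mathlib

/-!
Writing `v = (a, b, c, d)`,
`6 (v, v) = 3 (2a + b + c + d)² + (3b - c + d)² + 5 (2c + d)² + 15 d²`.
This gives positive definiteness and forces `c = d = 0` for vectors of norm `2`, so these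
span the plane `ℤ e₀ + ℤ e₁`; in the basis `e₀, -e₁` its Gram matrix is that of `A₂`.
The lattice is even because its Gram matrix is symmetric with even diagonal. For the level,
`5 T₄⁻¹` is integral with even diagonal, so `5 (x, x) ∈ 2ℤ` on the dual lattice, while the dual
vector `(4, -2, -1, 0)/5` has norm `4/5`.
-/

open Matrix

namespace LatQ

variable {ι κ : Type*} [Fintype ι] [Fintype κ]

/-- The bilinear form on `ι → ℚ` given by the matrix `F`. -/
def bform (F : Matrix ι ι ℚ) (x y : ι → ℚ) : ℚ := x ⬝ᵥ F *ᵥ y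

/-- A rational number is an integer. -/
def isIntQ (q : ℚ) : Prop := ∃ m : ℤ, q = (m : ℚ)

lemma isIntQ_add {a b : ℚ} (ha : isIntQ a) (hb : isIntQ b) : isIntQ (a + b) := by
  obtain ⟨m, rfl⟩ := ha; obtain ⟨n, rfl⟩ := hb; exact ⟨m + n, by push_cast; ring⟩

lemma bform_add_left (F : Matrix ι ι ℚ) (a b y : ι → ℚ) :
    bform F (a + b) y = bform F a y + bform F b y := add_dotProduct a b _

lemma bform_zero_left (F : Matrix ι ι ℚ) (y : ι → ℚ) : bform F 0 y = 0 := zero_dotProduct _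

lemma bform_zsmul_left (F : Matrix ι ι ℚ) (c : ℤ) (x y : ι → ℚ) :
    bform F (c • x) y = (c : ℚ) * bform F x y := by
  unfold bform
  rw [← Int.cast_smul_eq_zsmul ℚ c x, smul_dotProduct, smul_eq_mul]

/-- The dual lattice of `L` with respect to the form `F`, inside the ambient space `ι → ℚ`. -/
def dual (F : Matrix ι ι ℚ) (L : Submodule ℤ (ι → ℚ)) : Submodule ℤ (ι → ℚ) where
  carrier := {x | ∀ y ∈ L, isIntQ (bform F x y)}
  zero_mem' := fun y _ => ⟨0, by simp [bform_zero_left]⟩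
  add_mem' := fun ha hb y hy => by
    have := isIntQ_add (ha y hy) (hb y hy)
    rwa [← bform_add_left] at this
  smul_mem' := fun c x hx y hy => by
    obtain ⟨m, hm⟩ := hx y hy
    exact ⟨c * m, by rw [bform_zsmul_left, hm]; push_cast; ring⟩

/-- The standard lattice `ℤ^ι` inside `ℚ^ι`. -/
def stdLat (ι : Type*) : Submodule ℤ (ι → ℚ) where
  carrier := {x | ∀ i, isIntQ (x i)}
  zero_mem' := fun i => ⟨0, by simp⟩
  add_mem' := fun ha hb i => isIntQ_add (ha i) (hb i)
  smul_mem' := fun c x hx i => by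
    obtain ⟨m, hm⟩ := hx i
    exact ⟨c * m, by rw [Pi.smul_apply, hm, zsmul_eq_mul]; push_cast; ring⟩

/-- `L` is an even lattice (of full rank) in `(ι → ℚ, bform F)`. -/
structure IsEvenLattice [DecidableEq ι] (F : Matrix ι ι ℚ) (L : Submodule ℤ (ι → ℚ)) : Prop where
  fg : L.FG
  spans : Submodule.span ℚ (L : Set (ι → ℚ)) = ⊤
  symm : F.IsSymm
  nondeg : F.det ≠ 0
  integral : ∀ x ∈ L, ∀ y ∈ L, isIntQ (bform F x y)
  even : ∀ x ∈ L, ∃ m : ℤ, bform F x x = 2 * m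

/-- The real quadratic form of `F` diagonalizes with `bp` positive and `bm` negative entries. -/
def HasSignature [DecidableEq ι] (F : Matrix ι ι ℚ) (bp bm : ℕ) : Prop :=
  ∃ P : Matrix ι ι ℝ, IsUnit P.det ∧ (Pᵀ * F.map ((↑) : ℚ → ℝ) * P).IsDiag ∧
    Nat.card {i : ι // 0 < (Pᵀ * F.map ((↑) : ℚ → ℝ) * P) i i} = bp ∧
    Nat.card {i : ι // (Pᵀ * F.map ((↑) : ℚ → ℝ) * P) i i < 0} = bm

/-- `N` is the level of the even lattice `L`: the smallest positive integer with
`N·(x,x) ∈ 2ℤ` for all `x` in the dual lattice. -/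
def HasLevel (F : Matrix ι ι ℚ) (L : Submodule ℤ (ι → ℚ)) (N : ℕ) : Prop :=
  0 < N ∧ (∀ x ∈ dual F L, ∃ m : ℤ, (N : ℚ) * bform F x x = 2 * m) ∧
    ∀ N' : ℕ, 0 < N' → (∀ x ∈ dual F L, ∃ m : ℤ, (N' : ℚ) * bform F x x = 2 * m) → N ≤ N'

/-- The order of the discriminant group `L^∨/L`. -/
noncomputable def discCard (F : Matrix ι ι ℚ) (L : Submodule ℤ (ι → ℚ)) : ℕ :=
  Nat.card ((↥(dual F L)) ⧸ (Submodule.comap (dual F L).subtype L))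

/-- Two lattices (with ambient forms) are isometric. -/
def Isometric (F : Matrix ι ι ℚ) (L : Submodule ℤ (ι → ℚ))
    (F' : Matrix κ κ ℚ) (L' : Submodule ℤ (κ → ℚ)) : Prop :=
  ∃ e : L ≃ₗ[ℤ] L', ∀ x y : L,
    bform F' ((e x : κ → ℚ)) ((e y : κ → ℚ)) = bform F (x : ι → ℚ) (y : ι → ℚ)

/-- The isometry group `O(L)` of the lattice `L` with form `F`. -/
def OGroup (F : Matrix ι ι ℚ) (L : Submodule ℤ (ι → ℚ)) : Subgroup (↥L ≃ₗ[ℤ] ↥L) where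
  carrier := {e | ∀ x y : L,
    bform F ((e x : ι → ℚ)) ((e y : ι → ℚ)) = bform F (x : ι → ℚ) (y : ι → ℚ)}
  one_mem' := fun x y => rfl
  mul_mem' := fun {a b} ha hb x y => by
    have h1 : ∀ z : L, (a * b) z = a (b z) := fun z => rfl
    rw [h1, h1, ha, hb]
  inv_mem' := fun {a} ha x y => by
    have h := ha (a⁻¹ x) (a⁻¹ y)
    have hx : a (a⁻¹ x) = x := a.apply_symm_apply x
    have hy : a (a⁻¹ y) = y := a.apply_symm_apply y
    rw [hx, hy] at h
    exact h.symm

/-- Orthogonal direct sum of forms. -/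
def oplusF (F : Matrix ι ι ℚ) (G : Matrix κ κ ℚ) : Matrix (ι ⊕ κ) (ι ⊕ κ) ℚ :=
  Matrix.fromBlocks F 0 0 G

/-- Orthogonal direct sum of lattices. -/
def oplusL (L : Submodule ℤ (ι → ℚ)) (M : Submodule ℤ (κ → ℚ)) :
    Submodule ℤ (ι ⊕ κ → ℚ) where
  carrier := {x | (fun i => x (Sum.inl i)) ∈ L ∧ (fun j => x (Sum.inr j)) ∈ M}
  zero_mem' := ⟨L.zero_mem, M.zero_mem⟩
  add_mem' := fun ha hb => ⟨L.add_mem ha.1 hb.1, M.add_mem ha.2 hb.2⟩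
  smul_mem' := fun c _ hx => ⟨L.smul_mem c hx.1, M.smul_mem c hx.2⟩

end LatQ

namespace LatQ

/-- The Gram matrix of the lattice `T₄`. -/
def T4 : Matrix (Fin 4) (Fin 4) ℤ :=
  !![2, 1, 1, 1; 1, 2, 0, 1; 1, 0, 4, 2; 1, 1, 2, 4]

/-- The Gram matrix of the root lattice `A₂`. -/
def A2 : Matrix (Fin 2) (Fin 2) ℤ := !![2, -1; -1, 2]

section General

variable {ι : Type*}

theorem even_dotProduct_mulVec_self [Fintype ι] {G : Matrix ι ι ℤ} (hG : G.IsSymm)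
    (hdiag : ∀ i, Even (G i i)) (v : ι → ℤ) : Even (v ⬝ᵥ G *ᵥ v) := by
  classical
  let : LinearOrder ι := LinearOrder.lift' _ (Fintype.equivFin ι).injective
  -- Split `G` into its diagonal and the two mutually transposed off-diagonal triangles.
  set U : Matrix ι ι ℤ := of fun i j => if i < j then G i j else 0
  have hsplit : G = diagonal G.diag + (U + Uᵀ) := by
    ext i j
    rcases lt_trichotomy i j with h | rfl | h
    · simp [U, h, h.ne, h.not_gt]
    · simp [U]
    · simp [U, h, h.ne', h.not_gt, hG.apply]
  rw [hsplit, add_mulVec, dotProduct_add, add_mulVec, dotProduct_add,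
    dotProduct_transpose_mulVec]
  refine (Finset.even_sum _ fun i _ => ?_).add ⟨_, rfl⟩
  rw [mulVec_diagonal]
  exact ((hdiag i).mul_right _).mul_left _

theorem mem_stdLat_iff {x : ι → ℚ} : x ∈ stdLat ι ↔ ∃ w : ι → ℤ, x = fun i => (w i : ℚ) :=
  ⟨fun h => ⟨fun i => (h i).choose, funext fun i => (h i).choose_spec⟩,
    by rintro ⟨w, rfl⟩ i; exact ⟨w i, rfl⟩⟩

theorem mem_dual_stdLat_iff [Fintype ι] (F : Matrix ι ι ℚ) (x : ι → ℚ) :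
    x ∈ dual F (stdLat ι) ↔ x ᵥ* F ∈ stdLat ι := by
  classical
  refine ⟨fun h i => ?_, fun h y hy => ?_⟩
  · have hsingle : Pi.single i (1 : ℚ) ∈ stdLat ι := fun j => by
      rcases eq_or_ne j i with rfl | hj
      · exact ⟨1, by simp⟩
      · exact ⟨0, by simp [hj]⟩
    have := h _ hsingle
    rwa [bform, dotProduct_mulVec, dotProduct_single, mul_one] at this
  · obtain ⟨w, hw⟩ := mem_stdLat_iff.1 h
    obtain ⟨u, rfl⟩ := mem_stdLat_iff.1 hy
    exact ⟨w ⬝ᵥ u, by rw [bform, dotProduct_mulVec, hw]; simp [dotProduct]⟩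

/-- If `N • G⁻¹` is an integral matrix with even diagonal, then `N` annihilates the
discriminant form of `ℤ^ι` with Gram matrix `G`. -/
theorem exists_mul_bform_self_eq_two_mul [Fintype ι] [DecidableEq ι] {G A : Matrix ι ι ℤ}
    {N : ℕ} (hGA : G * A = N) (hA : A.IsSymm) (hAdiag : ∀ i, Even (A i i)) {x : ι → ℚ}
    (hx : x ∈ dual (G.map ((↑) : ℤ → ℚ)) (stdLat ι)) :
    ∃ m : ℤ, (N : ℚ) * bform (G.map ((↑) : ℤ → ℚ)) x x = 2 * m := by
  obtain ⟨w, hw⟩ := mem_stdLat_iff.1 ((mem_dual_stdLat_iff _ x).1 hx)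
  have hNx : (N : ℚ) • x = (fun i => (w i : ℚ)) ᵥ* A.map ((↑) : ℤ → ℚ) := by
    have hcast : G.map ((↑) : ℤ → ℚ) * A.map ((↑) : ℤ → ℚ) = N := by
      have h := congrArg (Int.castRingHom ℚ).mapMatrix hGA
      rwa [map_mul, map_natCast] at h
    rw [← hw, vecMul_vecMul, hcast]
    simp [Nat.cast_smul_eq_nsmul]
  obtain ⟨m, hm⟩ := (even_dotProduct_mulVec_self hA hAdiag w).two_dvd
  refine ⟨m, ?_⟩
  calc (N : ℚ) * bform (G.map ((↑) : ℤ → ℚ)) x x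
      = (x ᵥ* G.map ((↑) : ℤ → ℚ)) ⬝ᵥ ((N : ℚ) • x) := by
        rw [bform, dotProduct_mulVec, dotProduct_smul, smul_eq_mul]
    _ = (fun i => (w i : ℚ)) ⬝ᵥ ((fun i => (w i : ℚ)) ᵥ* A.map ((↑) : ℤ → ℚ)) := by rw [hw, hNx]
    _ = ((w ⬝ᵥ A *ᵥ w : ℤ) : ℚ) := by
        rw [dotProduct_comm, ← dotProduct_mulVec]; simp [dotProduct, mulVec]
    _ = 2 * m := by rw [hm]; push_cast; ring

theorem dotProduct_mulVec_mulVec_mulVec {m n R : Type*} [Fintype m] [Fintype n] [CommSemiring R]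
    (B : Matrix m n R) (G : Matrix m m R) (p q : n → R) :
    (B *ᵥ p) ⬝ᵥ G *ᵥ (B *ᵥ q) = p ⬝ᵥ (Bᵀ * G * B) *ᵥ q := by
  rw [mulVec_mulVec, dotProduct_mulVec, vecMul_mulVec, ← dotProduct_mulVec, Matrix.mul_assoc]

end General

theorem T4_isSymm : T4.IsSymm := by decide

theorem even_T4_diag (i : Fin 4) : Even (T4 i i) := by fin_cases i <;> decide

/-- `5 • T4⁻¹`: the Gram matrix of the dual basis of `T₄`, scaled by the level. -/
def T4dual : Matrix (Fin 4) (Fin 4) ℤ :=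
  !![4, -2, -1, 0; -2, 4, 1, -1; -1, 1, 2, -1; 0, -1, -1, 2]

theorem T4_mul_T4dual : T4 * T4dual = 5 := by decide

theorem T4dual_isSymm : T4dual.IsSymm := by decide

theorem even_T4dual_diag (i : Fin 4) : Even (T4dual i i) := by fin_cases i <;> decide

theorem det_T4 : T4.det = 25 := by
  simp [T4, det_succ_row_zero, Fin.sum_univ_succ, Fin.succAbove]

theorem six_mul_dotProduct_T4_mulVec (v : Fin 4 → ℤ) :
    6 * (v ⬝ᵥ T4 *ᵥ v) = 3 * (2 * v 0 + v 1 + v 2 + v 3) ^ 2 + (3 * v 1 - v 2 + v 3) ^ 2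
      + 5 * (2 * v 2 + v 3) ^ 2 + 15 * v 3 ^ 2 := by
  simp [T4, mulVec, dotProduct, Fin.sum_univ_four]
  ring

theorem dotProduct_T4_mulVec_pos {v : Fin 4 → ℤ} (hv : v ≠ 0) : 0 < v ⬝ᵥ T4 *ᵥ v := by
  have h6 := six_mul_dotProduct_T4_mulVec v
  by_contra! hle
  refine hv (funext fun i => ?_)
  have := sq_nonneg (2 * v 0 + v 1 + v 2 + v 3)
  have := sq_nonneg (3 * v 1 - v 2 + v 3)
  have := sq_nonneg (2 * v 2 + v 3)
  have := sq_nonneg (v 3)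
  obtain ⟨h0, h1, h2, h3⟩ : 2 * v 0 + v 1 + v 2 + v 3 = 0 ∧ 3 * v 1 - v 2 + v 3 = 0 ∧
      2 * v 2 + v 3 = 0 ∧ v 3 = 0 := by
    refine ⟨?_, ?_, ?_, ?_⟩ <;> refine pow_eq_zero_iff two_ne_zero |>.1 ?_ <;> linarith
  fin_cases i <;> simp <;> omega

theorem T4_coords_eq_zero_of_norm_two {v : Fin 4 → ℤ} (hv : v ⬝ᵥ T4 *ᵥ v = 2) :
    v 2 = 0 ∧ v 3 = 0 := by
  have h6 := six_mul_dotProduct_T4_mulVec v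
  rw [hv] at h6
  have h3 : v 3 = 0 := by
    nlinarith [sq_nonneg (2 * v 0 + v 1 + v 2 + v 3), sq_nonneg (3 * v 1 - v 2 + v 3),
      sq_nonneg (2 * v 2 + v 3)]
  have h2 : v 2 = 0 := by
    rw [h3] at h6
    nlinarith [sq_nonneg (2 * v 0 + v 1 + v 2), sq_nonneg (3 * v 1 - v 2)]
  exact ⟨h2, h3⟩

theorem T4_level : HasLevel (T4.map ((↑) : ℤ → ℚ)) (stdLat (Fin 4)) 5 := by
  refine ⟨by norm_num, fun x hx => exists_mul_bform_self_eq_two_mul T4_mul_T4dual T4dual_isSymm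
    even_T4dual_diag hx, fun N hN hlevel => ?_⟩
  -- The first dual basis vector, of norm `4/5`.
  set x : Fin 4 → ℚ := ![4 / 5, -2 / 5, -1 / 5, 0]
  have hxT4 : x ᵥ* T4.map ((↑) : ℤ → ℚ) = ![1, 0, 0, 0] := by
    ext i; fin_cases i <;> simp [x, T4, vecMul, dotProduct, Fin.sum_univ_four] <;> norm_num
  have hx : x ∈ dual (T4.map ((↑) : ℤ → ℚ)) (stdLat (Fin 4)) := by
    rw [mem_dual_stdLat_iff, hxT4]
    exact mem_stdLat_iff.2 ⟨![1, 0, 0, 0], by ext i; fin_cases i <;> simp⟩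
  obtain ⟨m, hm⟩ := hlevel x hx
  rw [bform, dotProduct_mulVec, hxT4] at hm
  have : 2 * (N : ℤ) = 5 * m := by
    simp [x, dotProduct, Fin.sum_univ_four] at hm
    exact_mod_cast (by linarith : (2 * N : ℚ) = 5 * m)
  omega

def A2embedding : Matrix (Fin 4) (Fin 2) ℤ := !![1, 0; 0, -1; 0, 0; 0, 0]

theorem A2embedding_gram : A2embeddingᵀ * T4 * A2embedding = A2 := by decide

theorem A2embedding_injective : Function.Injective A2embedding.mulVecLin := by
  intro p q h
  have h0 := congrFun h 0
  have h1 := congrFun h 1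
  simp [A2embedding, mulVec, dotProduct] at h0 h1
  ext i; fin_cases i <;> simp [h0, h1]

theorem span_norm_two_eq_range :
    Submodule.span ℤ {v : Fin 4 → ℤ | v ⬝ᵥ T4 *ᵥ v = 2} =
      LinearMap.range A2embedding.mulVecLin := by
  refine le_antisymm (Submodule.span_le.2 fun v hv => ?_) ?_
  · obtain ⟨h2, h3⟩ := T4_coords_eq_zero_of_norm_two hv
    exact ⟨![v 0, -v 1], by ext i; fin_cases i <;> simp [A2embedding, mulVec, dotProduct, h2, h3]⟩
  · rw [range_mulVecLin]
    refine Submodule.span_mono ?_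
    rintro _ ⟨j, rfl⟩
    fin_cases j <;> decide

noncomputable def normTwoSpanEquiv :
    Submodule.span ℤ {v : Fin 4 → ℤ | v ⬝ᵥ T4 *ᵥ v = 2} ≃ₗ[ℤ] (Fin 2 → ℤ) :=
  (LinearEquiv.ofEq _ _ span_norm_two_eq_range).trans
    (LinearEquiv.ofInjective _ A2embedding_injective).symm

theorem A2embedding_mulVec_normTwoSpanEquiv
    (x : Submodule.span ℤ {v : Fin 4 → ℤ | v ⬝ᵥ T4 *ᵥ v = 2}) :
    A2embedding *ᵥ normTwoSpanEquiv x = x :=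
  LinearEquiv.ofInjective_symm_apply (h := A2embedding_injective) _
    (LinearEquiv.ofEq _ _ span_norm_two_eq_range x)

theorem normTwoSpanEquiv_isometry (x y : Submodule.span ℤ {v : Fin 4 → ℤ | v ⬝ᵥ T4 *ᵥ v = 2}) :
    normTwoSpanEquiv x ⬝ᵥ A2 *ᵥ normTwoSpanEquiv y =
      (x : Fin 4 → ℤ) ⬝ᵥ T4 *ᵥ (y : Fin 4 → ℤ) := by
  rw [← A2embedding_gram, ← dotProduct_mulVec_mulVec_mulVec, A2embedding_mulVec_normTwoSpanEquiv,
    A2embedding_mulVec_normTwoSpanEquiv]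

theorem span_rat_norm_two_ne_top :
    Submodule.span ℚ
      ((fun v : Fin 4 → ℤ => (fun i => (v i : ℚ))) '' {v | v ⬝ᵥ T4 *ᵥ v = 2}) ≠ ⊤ := by
  intro htop
  have hle : Submodule.span ℚ
      ((fun v : Fin 4 → ℤ => (fun i => (v i : ℚ))) '' {v | v ⬝ᵥ T4 *ᵥ v = 2}) ≤
      LinearMap.ker (LinearMap.proj (R := ℚ) (φ := fun _ : Fin 4 => ℚ) 2) := by
    refine Submodule.span_le.2 ?_
    rintro _ ⟨v, hv, rfl⟩
    simp [(T4_coords_eq_zero_of_norm_two hv).1]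
  rw [htop] at hle
  simpa using hle (Submodule.mem_top (x := Pi.single 2 1))

/-- `T₄` is a positive definite even lattice of determinant `25` and
level `5`; the subgroup generated by its vectors of norm `2` is a sublattice of rank `2`
isometric to `A₂`; in particular the norm `2` vectors do not span `T₄ ⊗ ℚ`. -/
theorem statement19 :
    (∀ v : Fin 4 → ℤ, v ≠ 0 → 0 < v ⬝ᵥ T4 *ᵥ v) ∧
    (∀ v : Fin 4 → ℤ, ∃ m : ℤ, v ⬝ᵥ T4 *ᵥ v = 2 * m) ∧
    T4.det = 25 ∧
    HasLevel (T4.map ((↑) : ℤ → ℚ)) (stdLat (Fin 4)) 5 ∧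
    (∃ e : (Submodule.span ℤ {v : Fin 4 → ℤ | v ⬝ᵥ T4 *ᵥ v = 2}) ≃ₗ[ℤ] (Fin 2 → ℤ),
      ∀ x y : Submodule.span ℤ {v : Fin 4 → ℤ | v ⬝ᵥ T4 *ᵥ v = 2},
        (e x) ⬝ᵥ A2 *ᵥ (e y) = (x : Fin 4 → ℤ) ⬝ᵥ T4 *ᵥ (y : Fin 4 → ℤ)) ∧
    Submodule.span ℚ
        ((fun v : Fin 4 → ℤ => (fun i => (v i : ℚ))) '' {v | v ⬝ᵥ T4 *ᵥ v = 2}) ≠ ⊤ :=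
  ⟨fun _ => dotProduct_T4_mulVec_pos,
    fun v => (even_dotProduct_mulVec_self T4_isSymm even_T4_diag v).two_dvd,
    det_T4, T4_level, ⟨normTwoSpanEquiv, normTwoSpanEquiv_isometry⟩, span_rat_norm_two_ne_top⟩

end LatQ
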